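/- In the new logic dS_fde^→, for every valuation v and all formulas A, B: v(¬(A∨B)) is designated if and only if (v(¬A) and v(¬B) are both designated) or (v(A) and v(¬A) are both designated). -/
import Mathlib


inductive V4 : Type
  | T | B | N | F
deriving DecidableEq, Repr

def negS : V4 → V4
  | .T => .F
  | .B => .B
  | .N => .N
  | .F => .T

def andDA : V4 → V4 → V4
  | .T, y => y
  | .B, _ => .B
  | .N, .T => .N
  | .N, .B => .F
  | .N, .N => .N
  | .N, .F => .F
  | .F, _ => .F

def orDA : V4 → V4 → V4
  | .T, _ => .T
  | .B, _ => .B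
  | .N, .T => .T
  | .N, .B => .T
  | .N, .N => .N
  | .N, .F => .N
  | .F, y => y

inductive Fm : Type
  | var : Nat → Fm
  | neg : Fm → Fm
  | conj : Fm → Fm → Fm
  | disj : Fm → Fm → Fm

def eval (v : Nat → V4) : Fm → V4
  | .var p => v p
  | .neg A => negS (eval v A)
  | .conj A B => andDA (eval v A) (eval v B)
  | .disj A B => orDA (eval v A) (eval v B)

def des (x : V4) : Prop := x = V4.T ∨ x = V4.B

theorem dsfde_arrow_neg_disj_sound (v : Nat → V4) (A B : Fm) :
    des (eval v (Fm.neg (Fm.disj A B))) ↔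
      (des (eval v (Fm.neg A)) ∧ des (eval v (Fm.neg B))) ∨
      (des (eval v A) ∧ des (eval v (Fm.neg A))) := by
  cases h1 : eval v A <;> cases h2 : eval v B <;> simp [eval, des, negS, orDA, h1, h2]
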